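/- arXiv:1508.02630 — 5 statements merged into one kernel-verified Lean document; each statement's English description precedes it below -/
import Mathlib

section
/- For every integer k ≥ 1, the dihedral group of order 2k (the Coxeter group of type I₂(k)) is not a Beauville group. -/
/-!
Every square in `D_k` is a commutator, so the abelianization of `D_k` has exponent dividing 2.
Hence, for any generating pair `{x, y}`, the image of the reflection `sr 0` there is one of
`1`, `x`, `y`, `xy`, and it is not `1`. The commutators of `D_k` are the rotations `r (2b)`, so
an element with the same image as `sr 0` is a reflection `sr (2b)`, i.e. a conjugate of `sr 0`.
Thus `sr 0 ≠ 1` lies in `Σ(x, y)` for every generating pair, and no two such sets meet in `{1}`.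
-/

/-- `beauvilleSigma g h` is the set `Σ(g,h)`: the union over all integers `i` and all
`k` in the group of the conjugates `k⁻¹ gⁱ k`, `k⁻¹ hⁱ k` and `k⁻¹ (gh)ⁱ k`. -/
def beauvilleSigma {G : Type*} [Group G] (g h : G) : Set G :=
  {w | ∃ (i : ℤ) (k : G),
    w = k⁻¹ * g ^ i * k ∨ w = k⁻¹ * h ^ i * k ∨ w = k⁻¹ * (g * h) ^ i * k}

/-- `{x₁,y₁}, {x₂,y₂}` is an (unmixed) Beauville structure on `G`:
both pairs generate `G` and `Σ(x₁,y₁) ∩ Σ(x₂,y₂) = {1}`. -/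
def IsBeauvilleStructure {G : Type*} [Group G] (x₁ y₁ x₂ y₂ : G) : Prop :=
  Subgroup.closure {x₁, y₁} = ⊤ ∧ Subgroup.closure {x₂, y₂} = ⊤ ∧
    beauvilleSigma x₁ y₁ ∩ beauvilleSigma x₂ y₂ = {1}

/-- A group is a Beauville group if it admits a Beauville structure. -/
def IsBeauvilleGroup (G : Type*) [Group G] : Prop :=
  ∃ x₁ y₁ x₂ y₂ : G, IsBeauvilleStructure x₁ y₁ x₂ y₂

/-- A group is a strongly real Beauville group if it admits a Beauville structure
`{x₁,y₁}, {x₂,y₂}` together with an automorphism `φ` and elements `g₁, g₂` such that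
`gᵢ φ(xᵢ) gᵢ⁻¹ = xᵢ⁻¹` and `gᵢ φ(yᵢ) gᵢ⁻¹ = yᵢ⁻¹` for `i = 1, 2`. -/
def IsStronglyRealBeauvilleGroup (G : Type*) [Group G] : Prop :=
  ∃ x₁ y₁ x₂ y₂ : G, IsBeauvilleStructure x₁ y₁ x₂ y₂ ∧
    ∃ (φ : G ≃* G) (g₁ g₂ : G),
      g₁ * φ x₁ * g₁⁻¹ = x₁⁻¹ ∧ g₁ * φ y₁ * g₁⁻¹ = y₁⁻¹ ∧
      g₂ * φ x₂ * g₂⁻¹ = x₂⁻¹ ∧ g₂ * φ y₂ * g₂⁻¹ = y₂⁻¹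

open Subgroup
open scoped commutatorElement

section Beauville

variable {G : Type*} [Group G]

theorem mem_beauvilleSigma_of_isConj {g h c u : G} (hc : IsConj c u)
    (hu : u = g ∨ u = h ∨ u = g * h) : c ∈ beauvilleSigma g h := by
  obtain ⟨k, rfl⟩ := isConj_iff.mp hc.symm
  refine ⟨1, k⁻¹, ?_⟩
  rcases hu with rfl | rfl | rfl <;> simp

theorem not_isBeauvilleGroup_of_mem_beauvilleSigma {c : G} (hc : c ≠ 1)
    (hmem : ∀ x y : G, closure {x, y} = ⊤ → c ∈ beauvilleSigma x y) :
    ¬ IsBeauvilleGroup G := by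
  rintro ⟨x₁, y₁, x₂, y₂, h₁, h₂, hinter⟩
  have hc_mem : c ∈ beauvilleSigma x₁ y₁ ∩ beauvilleSigma x₂ y₂ := ⟨hmem _ _ h₁, hmem _ _ h₂⟩
  rw [hinter] at hc_mem
  exact hc hc_mem

theorem zpow_eq_one_or_self_of_sq_eq_one {a : G} (ha : a ^ 2 = 1) (m : ℤ) :
    a ^ m = 1 ∨ a ^ m = a := by
  obtain ⟨j, rfl | rfl⟩ := Int.even_or_odd' m
  · left
    rw [zpow_mul, zpow_ofNat, ha, one_zpow]
  · right
    rw [zpow_add_one, zpow_mul, zpow_ofNat, ha, one_zpow, one_mul]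

theorem mem_closure_pair_of_sq_eq_one {A : Type*} [CommGroup A] (hA : ∀ a : A, a ^ 2 = 1)
    {a b z : A} (hz : z ∈ closure {a, b}) : z = 1 ∨ z = a ∨ z = b ∨ z = a * b := by
  obtain ⟨m, n, rfl⟩ := mem_closure_pair.mp hz
  rcases zpow_eq_one_or_self_of_sq_eq_one (hA a) m with hm | hm <;>
    rcases zpow_eq_one_or_self_of_sq_eq_one (hA b) n with hn | hn <;>
    simp [hm, hn]

theorem Abelianization.of_eq_one_or_eq_of_closure_pair_eq_top
    (hsq : ∀ g : G, g ^ 2 ∈ commutator G) {x y : G} (h : closure {x, y} = ⊤) (g : G) :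
    of g = 1 ∨ of g = of x ∨ of g = of y ∨ of g = of (x * y) := by
  have hA : ∀ a : Abelianization G, a ^ 2 = 1 := by
    rintro ⟨a⟩
    rw [mk_eq_of, ← map_pow, ← MonoidHom.mem_ker, ker_of]
    exact hsq a
  have hg : of g ∈ closure {of x, of y} := by
    rw [← Set.image_pair, ← MonoidHom.map_closure, h]
    exact mem_map_of_mem _ (mem_top g)
  rw [map_mul]
  exact mem_closure_pair_of_sq_eq_one hA hg

end Beauville

namespace DihedralGroup

variable {n : ℕ}

theorem sr_ne_one (i : ZMod n) : sr i ≠ 1 := by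
  rw [one_def]
  exact nofun

def evenRotations (n : ℕ) : Subgroup (DihedralGroup n) where
  carrier := {g | ∃ b : ZMod n, g = r (2 * b)}
  one_mem' := ⟨0, by rw [mul_zero, r_zero]⟩
  mul_mem' := by
    rintro _ _ ⟨a, rfl⟩ ⟨b, rfl⟩
    exact ⟨a + b, by rw [r_mul_r, mul_add]⟩
  inv_mem' := by
    rintro _ ⟨a, rfl⟩
    exact ⟨-a, by rw [inv_r, mul_neg]⟩

theorem commutator_le_evenRotations : commutator (DihedralGroup n) ≤ evenRotations n := by
  rw [_root_.commutator, Subgroup.commutator_le]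
  rintro (i | i) - (j | j) -
  all_goals simp only [commutatorElement_def, r_mul_r, r_mul_sr, sr_mul_r, sr_mul_sr, inv_r, inv_sr]
  exacts [⟨0, congrArg r (by ring)⟩, ⟨i, congrArg r (by ring)⟩, ⟨-j, congrArg r (by ring)⟩,
    ⟨j - i, congrArg r (by ring)⟩]

theorem sq_mem_commutator (g : DihedralGroup n) : g ^ 2 ∈ commutator (DihedralGroup n) := by
  rcases g with i | i
  · have hsq : r i ^ 2 = ⁅sr (0 : ZMod n), r (-i)⁆ := by
      simp only [commutatorElement_def, sq, r_mul_r, sr_mul_r, sr_mul_sr, inv_r, inv_sr]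
      exact congrArg r (by ring)
    rw [hsq]
    exact commutator_mem_commutator (mem_top _) (mem_top _)
  · rw [sq, sr_mul_self]
    exact one_mem _

theorem isConj_sr_zero_of_abelianization_eq {g : DihedralGroup n}
    (hg : Abelianization.of g = Abelianization.of (sr 0 : DihedralGroup n)) :
    IsConj (sr 0) g := by
  rw [MonoidHom.eq_iff, Abelianization.ker_of] at hg
  obtain ⟨b, hb⟩ := commutator_le_evenRotations hg
  rw [inv_mul_eq_iff_eq_mul.mp hb, isConj_iff]
  refine ⟨r (-b), ?_⟩
  simp only [inv_r, r_mul_sr, sr_mul_r]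
  exact congrArg sr (by ring)

theorem sr_zero_mem_beauvilleSigma {x y : DihedralGroup n} (h : closure {x, y} = ⊤) :
    sr 0 ∈ beauvilleSigma x y := by
  rcases Abelianization.of_eq_one_or_eq_of_closure_pair_eq_top sq_mem_commutator h (sr 0) with
    h1 | hx | hy | hxy
  · rw [← map_one Abelianization.of, eq_comm] at h1
    exact absurd (isConj_one_right.mp (isConj_sr_zero_of_abelianization_eq h1).symm)
      (sr_ne_one 0)
  · exact mem_beauvilleSigma_of_isConj (isConj_sr_zero_of_abelianization_eq hx.symm) (.inl rfl)
  · exact mem_beauvilleSigma_of_isConj (isConj_sr_zero_of_abelianization_eq hy.symm)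
      (.inr (.inl rfl))
  · exact mem_beauvilleSigma_of_isConj (isConj_sr_zero_of_abelianization_eq hxy.symm)
      (.inr (.inr rfl))

end DihedralGroup

theorem stmt_13_general (k : ℕ) : ¬ IsBeauvilleGroup (DihedralGroup k) :=
  not_isBeauvilleGroup_of_mem_beauvilleSigma (DihedralGroup.sr_ne_one 0) fun _ _ ↦
    DihedralGroup.sr_zero_mem_beauvilleSigma

/-- For every integer `k ≥ 1`, the dihedral group of order `2k` (the Coxeter group of
type `I₂(k)`) is not a Beauville group. -/
theorem stmt_13 (k : ℕ) (hk : 1 ≤ k) : ¬ IsBeauvilleGroup (DihedralGroup k) :=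
  stmt_13_general k
end

section
/- If W₁, W₂ and W₃ are nontrivial finite Coxeter groups, then the direct product W₁ × W₂ × W₃ is not generated by two elements; in particular it is not a Beauville group. -/
private abbrev GG := Multiplicative (ZMod 2) × Multiplicative (ZMod 2) × Multiplicative (ZMod 2)

set_option synthInstance.maxSize 4000 in
set_option synthInstance.maxHeartbeats 2000000 in
set_option maxHeartbeats 4000000 in
private lemma aux_decide : ∀ a b : GG,
    (∀ x ∈ ({1, a, b, a*b} : Finset GG), ∀ y ∈ ({1, a, b, a*b} : Finset GG),
      x * y ∈ ({1, a, b, a*b} : Finset GG)) ∧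
    (∀ x ∈ ({1, a, b, a*b} : Finset GG), x⁻¹ ∈ ({1, a, b, a*b} : Finset GG)) ∧
    ∃ z : GG, z ∉ ({1, a, b, a*b} : Finset GG) := by decide

private lemma aux_not_two_gen (a b : GG) : Subgroup.closure {a, b} ≠ ⊤ := by
  intro h
  obtain ⟨hmul, hinv, z, hz⟩ := aux_decide a b
  let S : Subgroup GG :=
    { carrier := ({1, a, b, a*b} : Finset GG)
      mul_mem' := fun hx hy => hmul _ hx _ hy
      one_mem' := by simp
      inv_mem' := fun hx => hinv _ hx }
  have hle : Subgroup.closure {a, b} ≤ S := by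
    apply (Subgroup.closure_le S).2
    intro w hw
    rcases hw with hw | hw
    · subst hw; simp [S]
    · rw [Set.mem_singleton_iff] at hw; subst hw; simp [S]
  exact hz (hle (h ▸ Subgroup.mem_top z))

private lemma lengthParity_surj {B W : Type*} [Group W] {M : CoxeterMatrix B}
    (cs : CoxeterSystem M W) (i : B) : Function.Surjective cs.lengthParity := by
  intro t
  have : t = 1 ∨ t = Multiplicative.ofAdd 1 := by revert t; decide
  rcases this with h | h
  · exact ⟨1, by simp [h]⟩
  · exact ⟨cs.simple i, by rw [cs.lengthParity_simple, h]⟩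

/-- If `W₁`, `W₂` and `W₃` are nontrivial finite Coxeter groups (each equipped with a
Coxeter system whose set of simple reflections is nonempty), then `W₁ × W₂ × W₃` is not
generated by two elements; in particular it is not a Beauville group. -/
theorem stmt_14 {B₁ B₂ B₃ : Type*} [Nonempty B₁] [Nonempty B₂] [Nonempty B₃]
    (M₁ : CoxeterMatrix B₁) (M₂ : CoxeterMatrix B₂) (M₃ : CoxeterMatrix B₃)
    {W₁ W₂ W₃ : Type*} [Group W₁] [Group W₂] [Group W₃]
    [Finite W₁] [Finite W₂] [Finite W₃]
    (cs₁ : CoxeterSystem M₁ W₁) (cs₂ : CoxeterSystem M₂ W₂) (cs₃ : CoxeterSystem M₃ W₃) :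
    (¬ ∃ x y : W₁ × W₂ × W₃, Subgroup.closure {x, y} = ⊤) ∧
      ¬ IsBeauvilleGroup (W₁ × W₂ × W₃) := by
  have key : ¬ ∃ x y : W₁ × W₂ × W₃, Subgroup.closure {x, y} = ⊤ := by
    rintro ⟨x, y, hxy⟩
    obtain ⟨i₁⟩ := ‹Nonempty B₁›
    obtain ⟨i₂⟩ := ‹Nonempty B₂›
    obtain ⟨i₃⟩ := ‹Nonempty B₃›
    let f : W₁ × W₂ × W₃ →* GG :=
      (cs₁.lengthParity).prodMap ((cs₂.lengthParity).prodMap (cs₃.lengthParity))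
    have hfsurj : Function.Surjective f := by
      have := (lengthParity_surj cs₁ i₁).prodMap
        ((lengthParity_surj cs₂ i₂).prodMap (lengthParity_surj cs₃ i₃))
      simpa [f, MonoidHom.coe_prodMap] using this
    have htop : Subgroup.closure {f x, f y} = ⊤ := by
      rw [← Set.image_pair, ← MonoidHom.map_closure, hxy]
      exact Subgroup.map_top_of_surjective f hfsurj
    exact aux_not_two_gen _ _ htop
  exact ⟨key, fun ⟨x₁, y₁, x₂, y₂, h⟩ => key ⟨x₁, y₁, h.1⟩⟩
end

section
/- The direct product W(A₄) × W(I₂(3)) (isomorphic to Sym(5) × Sym(3)) is a strongly real Beauville group. -/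
/-!
`W(I₂(3))` has the Coxeter matrix of `W(A₂)`, and `W(Aₙ) ≅ Sym(n+1)` for every `n`:
the adjacent transpositions satisfy the Coxeter relations and generate `Sym(n+1)`, and
`|W(Aₙ)| ≤ (n+1)!` because the `n + 2` elements `sₙ sₙ₋₁ ⋯ sₘ` represent all right cosets of
`W(Aₙ)` in `W(Aₙ₊₁)`: right multiplication by a simple reflection permutes these cosets.

On `Sym(5) × Sym(3)` each of the two explicit pairs generates, since its subgroup contains a
`5`-cycle and a transposition of `Sym(5) × 1` and projects onto `Sym(3)`. The sets `Σ` meet only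
in `1` because no nontrivial power of `x₁`, `y₁`, `x₁y₁` has the same pair of cycle types as a
power of `x₂`, `y₂`, `x₂y₂`. Finally `φ = id` works: conjugation by the involution `gᵢ` inverts
both `xᵢ` and `yᵢ`.
-/

open Equiv

theorem Equiv.swap_mul_swap_pow_three {α : Type*} [Fintype α] [DecidableEq α] {a b c : α}
    (hab : a ≠ b) (hac : a ≠ c) (hbc : b ≠ c) : (swap a b * swap a c) ^ 3 = 1 := by
  rw [← (Perm.isThreeCycle_swap_mul_swap_same hab hac hbc).orderOf, pow_orderOf_eq_one]

theorem Equiv.swap_mul_swap_pow_two {α : Type*} [DecidableEq α] {x y z t : α}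
    (h : [x, y, z, t].Nodup) : (swap x y * swap z t) ^ 2 = 1 := by
  rw [sq, mul_assoc, ← mul_assoc (swap z t), ← (Perm.disjoint_swap_swap h).commute.eq]
  simp [mul_assoc]

theorem Equiv.Perm.closure_eq_top_of_cycleType {α : Type*} [Fintype α] [DecidableEq α]
    {σ τ : Perm α} (hp : (Fintype.card α).Prime) (hσ : σ.cycleType = {Fintype.card α})
    (hτ : τ.cycleType = {2}) : Subgroup.closure {σ, τ} = ⊤ := by
  refine closure_prime_cycle_swap hp (card_cycleType_eq_one.mp (by simp [hσ]))
    (Finset.eq_univ_of_card _ ?_) (card_support_eq_two.mp ?_)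
  · rw [← sum_cycleType, hσ, Multiset.sum_singleton]
  · rw [← sum_cycleType, hτ, Multiset.sum_singleton]

theorem Subgroup.closure_pair_eq_top_of_prod {G H : Type*} [Group G] [Group H] {x y : G × H}
    {a b : G} (hab : closure {a, b} = ⊤) (ha : (a, 1) ∈ closure {x, y})
    (hb : (b, 1) ∈ closure {x, y}) (hxy : closure {x.2, y.2} = ⊤) :
    closure {x, y} = ⊤ := by
  set K := closure {x, y}
  have hinl : K.comap (MonoidHom.inl G H) = ⊤ := by
    rw [eq_top_iff, ← hab, closure_le]
    rintro _ (rfl | rfl)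
    exacts [ha, hb]
  have hsnd : K.map (MonoidHom.snd G H) = ⊤ := by
    rw [MonoidHom.map_closure, Set.image_pair]
    exact hxy
  rw [eq_top_iff]
  rintro ⟨g, h⟩ -
  obtain ⟨k, hk, rfl⟩ : h ∈ K.map (MonoidHom.snd G H) := hsnd ▸ mem_top h
  have hg : MonoidHom.inl G H (g * k.1⁻¹) ∈ K := by
    rw [← mem_comap, hinl]
    trivial
  convert mul_mem hg hk using 1
  ext <;> simp

namespace CoxeterSystem

variable {B W : Type*} [Group W] {M : CoxeterMatrix B} (cs : CoxeterSystem M W)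

theorem simple_mul_simple_comm_of_eq_two {i j : B} (h : M i j = 2) :
    cs.simple i * cs.simple j = cs.simple j * cs.simple i := by
  have := cs.wordProd_braidWord_eq i j
  rw [braidWord, braidWord, M.symmetric j i, h] at this
  simpa [alternatingWord, wordProd] using this

theorem simple_braid_of_eq_three {i j : B} (h : M i j = 3) :
    cs.simple i * cs.simple j * cs.simple i = cs.simple j * cs.simple i * cs.simple j := by
  have := cs.wordProd_braidWord_eq j i
  rw [braidWord, braidWord, ← M.symmetric i j, h] at this
  simpa [alternatingWord, wordProd, mul_assoc] using this

end CoxeterSystem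

section DescendingProduct

variable {G : Type*} [Group G]

-- `descProd s m k = s (m + k - 1) * ⋯ * s (m + 1) * s m`
def descProd (s : ℕ → G) : ℕ → ℕ → G
  | _, 0 => 1
  | m, k + 1 => descProd s (m + 1) k * s m

variable {s : ℕ → G}

theorem descProd_succ (m k : ℕ) : descProd s m (k + 1) = descProd s (m + 1) k * s m := rfl

theorem descProd_succ_mul_self (hsq : ∀ i, s i * s i = 1) (m k : ℕ) :
    descProd s m (k + 1) * s m = descProd s (m + 1) k := by
  rw [descProd_succ, mul_assoc, hsq, mul_one]

theorem descProd_mul_comm (hcomm : ∀ i j, i + 2 ≤ j → s i * s j = s j * s i) {i m : ℕ}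
    (him : i + 2 ≤ m) (k : ℕ) : descProd s m k * s i = s i * descProd s m k := by
  induction k generalizing m with
  | zero => simp [descProd]
  | succ k ih =>
    rw [descProd_succ, mul_assoc, ← hcomm i m him, ← mul_assoc, ih (by omega), mul_assoc]

theorem descProd_mul_of_lt {N : ℕ} (hcomm : ∀ i j, i + 2 ≤ j → s i * s j = s j * s i)
    (hbraid : ∀ i, i + 1 < N → s (i + 1) * s i * s (i + 1) = s i * s (i + 1) * s i)
    {i m k : ℕ} (hmi : m < i) (hik : i < m + k) (hkN : m + k ≤ N) :
    descProd s m k * s i = s (i - 1) * descProd s m k := by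
  induction k generalizing m with
  | zero => omega
  | succ k ih =>
    rw [descProd_succ]
    rcases Nat.lt_or_ge (m + 1) i with hmi' | hmi'
    · rw [mul_assoc, hcomm m i (by omega), ← mul_assoc, ih hmi' (by omega) (by omega), mul_assoc]
    · obtain rfl : i = m + 1 := by omega
      obtain ⟨k, rfl⟩ : ∃ k', k = k' + 1 := ⟨k - 1, by omega⟩
      calc descProd s (m + 2) k * s (m + 1) * s m * s (m + 1)
          = descProd s (m + 2) k * (s m * s (m + 1) * s m) := by
            rw [← hbraid m (by omega)]; simp only [mul_assoc]
        _ = s m * descProd s (m + 1) (k + 1) * s m := by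
            rw [descProd_succ, ← mul_assoc, ← mul_assoc, descProd_mul_comm hcomm le_rfl,
              mul_assoc (s m)]
        _ = s (m + 1 - 1) * (descProd s (m + 1) (k + 1) * s m) := by
            rw [Nat.add_sub_cancel, mul_assoc]

end DescendingProduct

namespace CoxeterMatrix

theorem A_apply_of_add_two_le {n : ℕ} {i j : Fin n} (h : (i : ℕ) + 2 ≤ j) :
    CoxeterMatrix.A n i j = 2 := by
  simp only [CoxeterMatrix.A, Fin.ext_iff, Matrix.of_apply]
  split_ifs <;> omega

theorem A_apply_of_succ_eq {n : ℕ} {i j : Fin n} (h : (i : ℕ) + 1 = j) :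
    CoxeterMatrix.A n i j = 3 := by
  simp only [CoxeterMatrix.A, Fin.ext_iff, Matrix.of_apply]
  split_ifs <;> omega

theorem A_apply_castSucc {n : ℕ} (i j : Fin n) :
    CoxeterMatrix.A (n + 1) i.castSucc j.castSucc = CoxeterMatrix.A n i j := by
  simp only [CoxeterMatrix.A, Fin.ext_iff, Matrix.of_apply, Fin.val_castSucc]

theorem I_one_eq_A_two : CoxeterMatrix.I 1 = CoxeterMatrix.A 2 := by
  ext i j
  fin_cases i <;> fin_cases j <;> rfl

-- Indexed by `ℕ` so that index arithmetic stays in `ℕ`; junk value `1` for `i ≥ n`.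
noncomputable def typeASimple (n i : ℕ) : (CoxeterMatrix.A n).Group :=
  if h : i < n then (CoxeterMatrix.A n).toCoxeterSystem.simple ⟨i, h⟩ else 1

variable {n : ℕ}

theorem toCoxeterSystem_simple_eq_typeASimple (i : Fin n) :
    (CoxeterMatrix.A n).toCoxeterSystem.simple i = typeASimple n i := by
  rw [typeASimple, dif_pos i.isLt]

theorem typeASimple_mul_self (i : ℕ) : typeASimple n i * typeASimple n i = 1 := by
  unfold typeASimple
  split_ifs
  exacts [CoxeterSystem.simple_mul_simple_self _ _, mul_one 1]

theorem typeASimple_comm {i j : ℕ} (hij : i + 2 ≤ j) :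
    typeASimple n i * typeASimple n j = typeASimple n j * typeASimple n i := by
  unfold typeASimple
  split_ifs
  · exact CoxeterSystem.simple_mul_simple_comm_of_eq_two _ (A_apply_of_add_two_le hij)
  all_goals simp

theorem typeASimple_braid {i : ℕ} (hi : i + 1 < n) :
    typeASimple n (i + 1) * typeASimple n i * typeASimple n (i + 1) =
      typeASimple n i * typeASimple n (i + 1) * typeASimple n i := by
  simp only [typeASimple, dif_pos hi, dif_pos (show i < n by omega)]
  exact CoxeterSystem.simple_braid_of_eq_three _
    (by rw [CoxeterMatrix.symmetric]; exact A_apply_of_succ_eq rfl)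

noncomputable def typeAInclusion (n : ℕ) :
    (CoxeterMatrix.A n).Group →* (CoxeterMatrix.A (n + 1)).Group :=
  (CoxeterMatrix.A n).toCoxeterSystem.lift
    ⟨fun i => (CoxeterMatrix.A (n + 1)).toCoxeterSystem.simple i.castSucc, fun i j => by
      rw [← A_apply_castSucc]
      exact CoxeterSystem.simple_mul_simple_pow _ _ _⟩

theorem typeASimple_mem_range_typeAInclusion {i : ℕ} (hi : i < n) :
    typeASimple (n + 1) i ∈ (typeAInclusion n).range := by
  refine ⟨typeASimple n i, ?_⟩
  rw [typeASimple, typeASimple, dif_pos hi, dif_pos (by omega)]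
  exact (CoxeterMatrix.A n).toCoxeterSystem.lift_apply_simple _ _

theorem exists_eq_typeAInclusion_mul_descProd (w : (CoxeterMatrix.A (n + 1)).Group) :
    ∃ h ∈ (typeAInclusion n).range, ∃ m ≤ n + 1,
      w = h * descProd (typeASimple (n + 1)) m (n + 1 - m) := by
  induction w using (CoxeterMatrix.A (n + 1)).toCoxeterSystem.simple_induction_right with
  | one => exact ⟨1, one_mem _, n + 1, le_rfl, by simp [descProd]⟩
  | mul_simple_right w i ih =>
    obtain ⟨h, hh, m, hm, rfl⟩ := ih
    obtain ⟨i, hi⟩ := i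
    rw [toCoxeterSystem_simple_eq_typeASimple, mul_assoc]
    set s := typeASimple (n + 1)
    rcases (by omega : i + 2 ≤ m ∨ i + 1 = m ∨ i = m ∨ m < i) with him | rfl | rfl | hmi
    · refine ⟨h * s i, mul_mem hh (typeASimple_mem_range_typeAInclusion (by omega)), m, hm, ?_⟩
      rw [descProd_mul_comm (fun _ _ => typeASimple_comm) him, mul_assoc]
    · refine ⟨h, hh, i, by omega, ?_⟩
      rw [show n + 1 - i = n + 1 - (i + 1) + 1 by omega, descProd_succ]
    · refine ⟨h, hh, i + 1, by omega, ?_⟩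
      rw [show n + 1 - i = n + 1 - (i + 1) + 1 by omega,
        descProd_succ_mul_self typeASimple_mul_self]
    · refine ⟨h * s (i - 1), mul_mem hh (typeASimple_mem_range_typeAInclusion (by omega)), m,
        hm, ?_⟩
      rw [descProd_mul_of_lt (N := n + 1) (fun _ _ => typeASimple_comm)
        (fun _ => typeASimple_braid) hmi (by omega) (by omega), mul_assoc]

theorem finite_and_card_A_le_factorial (n : ℕ) :
    Finite (CoxeterMatrix.A n).Group ∧
      Nat.card (CoxeterMatrix.A n).Group ≤ (n + 1).factorial := by
  induction n with
  | zero =>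
    have h1 (w : (CoxeterMatrix.A 0).Group) : w = 1 := by
      induction w using (CoxeterMatrix.A 0).toCoxeterSystem.simple_induction_right with
      | one => rfl
      | mul_simple_right _ i => exact i.elim0
    have : Subsingleton (CoxeterMatrix.A 0).Group := ⟨fun v w => (h1 v).trans (h1 w).symm⟩
    exact ⟨inferInstance, Finite.card_le_one_iff_subsingleton.mpr this⟩
  | succ n ih =>
    obtain ⟨_, hcard⟩ := ih
    let f : (CoxeterMatrix.A n).Group × Fin (n + 2) → (CoxeterMatrix.A (n + 1)).Group :=
      fun p => typeAInclusion n p.1 * descProd (typeASimple (n + 1)) p.2 (n + 1 - p.2)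
    have hf : Function.Surjective f := by
      intro w
      obtain ⟨_, ⟨h, rfl⟩, m, hm, rfl⟩ := exists_eq_typeAInclusion_mul_descProd w
      exact ⟨(h, ⟨m, by omega⟩), rfl⟩
    refine ⟨Finite.of_surjective f hf, ?_⟩
    calc Nat.card (CoxeterMatrix.A (n + 1)).Group
        ≤ Nat.card ((CoxeterMatrix.A n).Group × Fin (n + 2)) :=
          Nat.card_le_card_of_surjective f hf
      _ ≤ (n + 1).factorial * (n + 2) := by rw [Nat.card_prod, Nat.card_fin]; gcongr
      _ = (n + 2).factorial := by rw [Nat.factorial_succ (n + 1)]; ring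

theorem isLiftable_A_swap_castSucc_succ (n : ℕ) :
    (CoxeterMatrix.A n).IsLiftable fun i => swap i.castSucc i.succ := by
  intro i j
  beta_reduce
  rcases (by omega : (i : ℕ) = j ∨ (i : ℕ) + 1 = j ∨ (j : ℕ) + 1 = i ∨ (i : ℕ) + 2 ≤ j ∨
    (j : ℕ) + 2 ≤ i) with h | h | h | h | h
  · obtain rfl := Fin.ext h
    simp
  · have hj : j.castSucc = i.succ := Fin.ext (by simp [h])
    rw [A_apply_of_succ_eq h, hj, swap_comm]
    exact swap_mul_swap_pow_three (by simp [Fin.ext_iff]) (by simp [Fin.ext_iff]; omega)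
      (by simp [Fin.ext_iff]; omega)
  · have hi : i.castSucc = j.succ := Fin.ext (by simp [h])
    rw [(CoxeterMatrix.A n).symmetric, A_apply_of_succ_eq h, hi, swap_comm j.castSucc]
    exact swap_mul_swap_pow_three (by simp [Fin.ext_iff]; omega) (by simp [Fin.ext_iff])
      (by simp [Fin.ext_iff]; omega)
  · rw [A_apply_of_add_two_le h]
    exact swap_mul_swap_pow_two (by simp [Fin.ext_iff]; omega)
  · rw [(CoxeterMatrix.A n).symmetric, A_apply_of_add_two_le h]
    exact swap_mul_swap_pow_two (by simp [Fin.ext_iff]; omega)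

noncomputable def typeAToPerm (n : ℕ) : (CoxeterMatrix.A n).Group →* Perm (Fin (n + 1)) :=
  (CoxeterMatrix.A n).toCoxeterSystem.lift ⟨_, isLiftable_A_swap_castSucc_succ n⟩

theorem typeAToPerm_surjective (n : ℕ) : Function.Surjective (typeAToPerm n) := by
  rw [← MonoidHom.mrange_eq_top, eq_top_iff, ← Perm.mclosure_swap_castSucc_succ,
    Submonoid.closure_le]
  rintro _ ⟨i, rfl⟩
  exact ⟨_, (CoxeterMatrix.A n).toCoxeterSystem.lift_apply_simple _ i⟩

theorem typeAToPerm_bijective (n : ℕ) : Function.Bijective (typeAToPerm n) := by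
  obtain ⟨_, hcard⟩ := finite_and_card_A_le_factorial n
  refine (typeAToPerm_surjective n).bijective_of_nat_card_le ?_
  rwa [Nat.card_perm, Nat.card_fin]

noncomputable def typeAMulEquivPerm (n : ℕ) : (CoxeterMatrix.A n).Group ≃* Perm (Fin (n + 1)) :=
  MulEquiv.ofBijective _ (typeAToPerm_bijective n)

end CoxeterMatrix

section Beauville

variable {G H : Type*} [Group G] [Group H]

theorem beauvilleSigma_map (e : G ≃* H) (g h : G) :
    beauvilleSigma (e g) (e h) = e '' beauvilleSigma g h := by
  ext w
  constructor
  · rintro ⟨i, k, hw | hw | hw⟩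
    · exact ⟨_, ⟨i, e.symm k, Or.inl rfl⟩, by simp [hw]⟩
    · exact ⟨_, ⟨i, e.symm k, Or.inr (Or.inl rfl)⟩, by simp [hw]⟩
    · exact ⟨_, ⟨i, e.symm k, Or.inr (Or.inr rfl)⟩, by simp [hw]⟩
  · rintro ⟨v, ⟨i, k, rfl | rfl | rfl⟩, rfl⟩
    · exact ⟨i, e k, Or.inl (by simp)⟩
    · exact ⟨i, e k, Or.inr (Or.inl (by simp))⟩
    · exact ⟨i, e k, Or.inr (Or.inr (by simp))⟩

theorem Subgroup.closure_pair_map (e : G ≃* H) {x y : G} (h : closure {x, y} = ⊤) :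
    closure {e x, e y} = ⊤ := by
  rw [← Set.image_pair, ← MulEquiv.coe_toMonoidHom, ← MonoidHom.map_closure, h]
  exact map_top_of_surjective _ e.surjective

theorem IsBeauvilleStructure.map (e : G ≃* H) {x₁ y₁ x₂ y₂ : G}
    (h : IsBeauvilleStructure x₁ y₁ x₂ y₂) :
    IsBeauvilleStructure (e x₁) (e y₁) (e x₂) (e y₂) := by
  obtain ⟨h₁, h₂, h₁₂⟩ := h
  refine ⟨Subgroup.closure_pair_map e h₁, Subgroup.closure_pair_map e h₂, ?_⟩
  rw [beauvilleSigma_map, beauvilleSigma_map, ← Set.image_inter e.injective, h₁₂,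
    Set.image_singleton, map_one]

theorem IsStronglyRealBeauvilleGroup.of_mulEquiv (e : G ≃* H)
    (hG : IsStronglyRealBeauvilleGroup G) : IsStronglyRealBeauvilleGroup H := by
  obtain ⟨x₁, y₁, x₂, y₂, hB, φ, g₁, g₂, h₁, h₂, h₃, h₄⟩ := hG
  have transport {g x : G} (hx : g * φ x * g⁻¹ = x⁻¹) :
      e g * (e.symm.trans (φ.trans e)) (e x) * (e g)⁻¹ = (e x)⁻¹ := by
    simp [← map_inv, ← map_mul, hx]
  exact ⟨_, _, _, _, hB.map e, e.symm.trans (φ.trans e), e g₁, e g₂,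
    transport h₁, transport h₂, transport h₃, transport h₄⟩

theorem exists_lt_zpow_eq_pow {a : G} {m : ℕ} (hm : 0 < m) (ha : a ^ m = 1) (i : ℤ) :
    ∃ r < m, a ^ i = a ^ r := by
  have hlt := Int.emod_lt_of_pos i (Int.natCast_pos.mpr hm)
  refine ⟨(i % m).toNat, by omega, ?_⟩
  rw [← zpow_natCast, Int.toNat_of_nonneg (Int.emod_nonneg i (by omega)),
    zpow_eq_zpow_emod' i ha]

theorem zpow_eq_one_of_conj_eq {β : Type*} (f : G → β) (hf : ∀ k g, f (k⁻¹ * g * k) = f g)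
    {a b : G} {m n : ℕ} [NeZero m] [NeZero n] (ha : a ^ m = 1) (hb : b ^ n = 1)
    (hab : ∀ (r : Fin m) (r' : Fin n), f (a ^ (r : ℕ)) = f (b ^ (r' : ℕ)) → a ^ (r : ℕ) = 1)
    {i j : ℤ} {k l : G} (h : k⁻¹ * a ^ i * k = l⁻¹ * b ^ j * l) : a ^ i = 1 := by
  obtain ⟨r, hr, hri⟩ := exists_lt_zpow_eq_pow (NeZero.pos m) ha i
  obtain ⟨r', hr', hrj⟩ := exists_lt_zpow_eq_pow (NeZero.pos n) hb j
  rw [hri, hrj] at h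
  rw [hri]
  exact hab ⟨r, hr⟩ ⟨r', hr'⟩ (by rw [← hf k, h, hf])

theorem beauvilleSigma_inter_eq_one {x₁ y₁ x₂ y₂ : G}
    (h : ∀ a ∈ ({x₁, y₁, x₁ * y₁} : Set G), ∀ b ∈ ({x₂, y₂, x₂ * y₂} : Set G),
      ∀ (i j : ℤ) (k l : G), k⁻¹ * a ^ i * k = l⁻¹ * b ^ j * l → a ^ i = 1) :
    beauvilleSigma x₁ y₁ ∩ beauvilleSigma x₂ y₂ = {1} := by
  refine Set.eq_singleton_iff_unique_mem.mpr ⟨⟨⟨0, 1, by simp⟩, ⟨0, 1, by simp⟩⟩, ?_⟩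
  rintro w ⟨⟨i, k, hw | hw | hw⟩, ⟨j, l, hw' | hw' | hw'⟩⟩ <;>
    rw [hw, h _ (by simp) _ (by simp) i j k l (hw.symm.trans hw')] <;> group

end Beauville

namespace Sym5Sym3

abbrev P := Perm (Fin 5) × Perm (Fin 3)

def x₁ : P := (c[0, 2, 3, 4, 1], swap 0 2)
def y₁ : P := (c[0, 1, 2, 4], c[0, 1, 2])
def x₂ : P := (swap 0 3 * swap 1 4, swap 0 1)
def y₂ : P := (swap 0 4 * c[1, 3, 2], c[0, 2, 1])
def g₁ : P := (swap 0 1 * swap 2 4, swap 0 2)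
def g₂ : P := (swap 0 4 * swap 1 3, swap 0 1)

def cycleTypes (g : P) : Multiset ℕ × Multiset ℕ := (g.1.cycleType, g.2.cycleType)

theorem cycleTypes_conj (k g : P) : cycleTypes (k⁻¹ * g * k) = cycleTypes g := by
  simpa [cycleTypes] using
    ⟨Perm.cycleType_conj (τ := k.1⁻¹) (σ := g.1), Perm.cycleType_conj (τ := k.2⁻¹) (σ := g.2)⟩

theorem closure_x₁_y₁ : Subgroup.closure {x₁, y₁} = ⊤ := by
  have hx : x₁ ∈ Subgroup.closure {x₁, y₁} := Subgroup.subset_closure (by simp)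
  have hy : y₁ ∈ Subgroup.closure {x₁, y₁} := Subgroup.subset_closure (by simp)
  refine Subgroup.closure_pair_eq_top_of_prod (a := c[0, 3, 1, 2, 4]) (b := swap 1 3)
    (Perm.closure_eq_top_of_cycleType (by norm_num) (by decide) (by decide)) ?_ ?_ ?_
  · rw [show ((c[0, 3, 1, 2, 4], 1) : P) = x₁ ^ 2 by decide +kernel]
    exact pow_mem hx 2
  · rw [show ((swap 1 3, 1) : P) = x₁ ^ 2 * y₁ ^ 3 by decide +kernel]
    exact mul_mem (pow_mem hx 2) (pow_mem hy 3)
  · rw [Set.pair_comm]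
    exact Perm.closure_eq_top_of_cycleType (by norm_num) (by decide) (by decide)

theorem closure_x₂_y₂ : Subgroup.closure {x₂, y₂} = ⊤ := by
  have hx : x₂ ∈ Subgroup.closure {x₂, y₂} := Subgroup.subset_closure (by simp)
  have hy : y₂ ∈ Subgroup.closure {x₂, y₂} := Subgroup.subset_closure (by simp)
  refine Subgroup.closure_pair_eq_top_of_prod (a := c[0, 4, 2, 3, 1]) (b := swap 0 4)
    (Perm.closure_eq_top_of_cycleType (by norm_num) (by decide) (by decide)) ?_ ?_ ?_
  · rw [show ((c[0, 4, 2, 3, 1], 1) : P) = (x₂ * y₂ ^ 2) ^ 2 by decide +kernel]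
    exact pow_mem (mul_mem hx (pow_mem hy 2)) 2
  · rw [show ((swap 0 4, 1) : P) = y₂ ^ 3 by decide +kernel]
    exact pow_mem hy 3
  · rw [Set.pair_comm]
    exact Perm.closure_eq_top_of_cycleType (by norm_num) (by decide) (by decide)

theorem beauvilleSigma_inter : beauvilleSigma x₁ y₁ ∩ beauvilleSigma x₂ y₂ = {1} := by
  have hx₁ : x₁ ^ 10 = 1 := by decide +kernel
  have hy₁ : y₁ ^ 12 = 1 := by decide +kernel
  have hxy₁ : (x₁ * y₁) ^ 4 = 1 := by decide +kernel
  have hx₂ : x₂ ^ 2 = 1 := by decide +kernel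
  have hy₂ : y₂ ^ 6 = 1 := by decide +kernel
  have hxy₂ : (x₂ * y₂) ^ 6 = 1 := by decide +kernel
  refine beauvilleSigma_inter_eq_one ?_
  simp only [Set.mem_insert_iff, Set.mem_singleton_iff]
  rintro a (rfl | rfl | rfl) b (rfl | rfl | rfl) i j k l
  · exact zpow_eq_one_of_conj_eq cycleTypes cycleTypes_conj hx₁ hx₂ (by decide +kernel)
  · exact zpow_eq_one_of_conj_eq cycleTypes cycleTypes_conj hx₁ hy₂ (by decide +kernel)
  · exact zpow_eq_one_of_conj_eq cycleTypes cycleTypes_conj hx₁ hxy₂ (by decide +kernel)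
  · exact zpow_eq_one_of_conj_eq cycleTypes cycleTypes_conj hy₁ hx₂ (by decide +kernel)
  · exact zpow_eq_one_of_conj_eq cycleTypes cycleTypes_conj hy₁ hy₂ (by decide +kernel)
  · exact zpow_eq_one_of_conj_eq cycleTypes cycleTypes_conj hy₁ hxy₂ (by decide +kernel)
  · exact zpow_eq_one_of_conj_eq cycleTypes cycleTypes_conj hxy₁ hx₂ (by decide +kernel)
  · exact zpow_eq_one_of_conj_eq cycleTypes cycleTypes_conj hxy₁ hy₂ (by decide +kernel)
  · exact zpow_eq_one_of_conj_eq cycleTypes cycleTypes_conj hxy₁ hxy₂ (by decide +kernel)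

theorem isStronglyRealBeauvilleGroup : IsStronglyRealBeauvilleGroup P :=
  ⟨x₁, y₁, x₂, y₂, ⟨closure_x₁_y₁, closure_x₂_y₂, beauvilleSigma_inter⟩, MulEquiv.refl P, g₁, g₂,
    by decide +kernel, by decide +kernel, by decide +kernel, by decide +kernel⟩

end Sym5Sym3

/-- The direct product `W(A₄) × W(I₂(3))` (isomorphic to `Sym(5) × Sym(3)`) is a strongly
real Beauville group. (Note `CoxeterMatrix.I₂ₘ 1` is the Coxeter matrix of type `I₂(3)`.) -/
theorem stmt_16 :
    IsStronglyRealBeauvilleGroup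
      ((CoxeterMatrix.A 4).Group × (CoxeterMatrix.I 1).Group) := by
  rw [CoxeterMatrix.I_one_eq_A_two]
  exact Sym5Sym3.isStronglyRealBeauvilleGroup.of_mulEquiv
    ((CoxeterMatrix.typeAMulEquivPerm 4).prodCongr (CoxeterMatrix.typeAMulEquivPerm 2)).symm
end

section
/- For all integers k, k' ≥ 1, the direct product W(I₂(k)) × W(I₂(k')) of two dihedral groups (of orders 2k and 2k') is not a Beauville group. -/
/-!
If `k` is even, `D_k × D_{k'}` maps onto `(ℤˣ)³` by the reflection signs of both factors and the
parity of the rotation index in the first. In a group of exponent 2 two elements generate at most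
four elements, so `D_k × D_{k'}` is not 2-generated; symmetrically if `k'` is even.

If `k` and `k'` are odd, the two reflection signs map `D_k × D_{k'}` onto the Klein four-group, so
for every generating pair `x, y` one of `x, y, xy` is a pair of reflections. All reflections of a
dihedral group of odd degree are conjugate, so the two such elements coming from the two pairs of a
Beauville structure are conjugate, and hence a nontrivial element of `Σ(x₁,y₁) ∩ Σ(x₂,y₂)`.
-/

open Subgroup DihedralGroup

section BooleanGroup

variable {G H : Type*} [Group G] [CommGroup H]

lemma closure_pair_subset_of_mul_self (hH : ∀ g : H, g * g = 1) (a b : H) :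
    (closure {a, b} : Set H) ⊆ {1, a, b, a * b} := by
  have hzpow (g : H) (m : ℤ) : g ^ m = 1 ∨ g ^ m = g := by
    rw [zpow_eq_zpow_emod' m (n := 2) (by rw [pow_two, hH])]
    rcases Int.emod_two_eq_zero_or_one m with h | h <;> simp [h]
  intro z hz
  obtain ⟨m, n, rfl⟩ := mem_closure_pair.1 hz
  rcases hzpow a m with ha | ha <;> rcases hzpow b n with hb | hb <;> simp [ha, hb]

lemma closure_pair_ne_top_of_mul_self [Finite H] (hH : ∀ g : H, g * g = 1)
    (hcard : 4 < Nat.card H) (a b : H) : closure {a, b} ≠ ⊤ := by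
  classical
  intro htop
  have hsub : (Set.univ : Set H) ⊆ ↑({1, a, b, a * b} : Finset H) := fun z _ => by
    simpa using closure_pair_subset_of_mul_self hH a b (htop ▸ mem_top z : z ∈ closure {a, b})
  have := (Set.ncard_le_ncard hsub (Finset.finite_toSet _)).trans_eq (Set.ncard_coe_finset _)
  rw [Set.ncard_univ] at this
  exact (this.trans Finset.card_le_four).not_gt hcard

lemma closure_pair_map_eq_top {f : G →* H} (hf : Function.Surjective f) {x y : G}
    (h : closure {x, y} = ⊤) : closure {f x, f y} = ⊤ := by
  rw [← Set.image_pair, ← MonoidHom.map_closure, h, map_top_of_surjective f hf]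

lemma closure_pair_ne_top_of_surjective [Finite H] (hH : ∀ g : H, g * g = 1)
    (hcard : 4 < Nat.card H) {f : G →* H} (hf : Function.Surjective f) (x y : G) :
    closure {x, y} ≠ ⊤ := fun h =>
  closure_pair_ne_top_of_mul_self hH hcard (f x) (f y) (closure_pair_map_eq_top hf h)

lemma exists_mem_map_eq_of_closure_pair_eq_top (hH : ∀ g : H, g * g = 1) {f : G →* H}
    (hf : Function.Surjective f) {x y : G} (h : closure {x, y} = ⊤) {t : H} (ht : t ≠ 1) :
    ∃ u ∈ ({x, y, x * y} : Set G), f u = t := by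
  have hmem : t ∈ (closure {f x, f y} : Set H) := by
    rw [closure_pair_map_eq_top hf h]; trivial
  rcases closure_pair_subset_of_mul_self hH (f x) (f y) hmem with h1 | hx | hy | hxy
  · exact absurd h1 ht
  · exact ⟨x, by simp, hx.symm⟩
  · exact ⟨y, by simp, hy.symm⟩
  · exact ⟨x * y, by simp, by rw [map_mul, hxy]⟩

end BooleanGroup

lemma IsConj.prodMk {G H : Type*} [Group G] [Group H] {a c : G} {b d : H}
    (h₁ : IsConj a c) (h₂ : IsConj b d) : IsConj (a, b) (c, d) := by
  obtain ⟨g, hg⟩ := isConj_iff.1 h₁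
  obtain ⟨h, hh⟩ := isConj_iff.1 h₂
  exact isConj_iff.2 ⟨(g, h), Prod.ext hg hh⟩

namespace DihedralGroup

variable {n : ℕ}

def sign : DihedralGroup n →* ℤˣ where
  toFun
    | r _ => 1
    | sr _ => -1
  map_one' := rfl
  map_mul' := by rintro (i | i) (j | j) <;> simp [r_mul_r, r_mul_sr, sr_mul_r, sr_mul_sr]

@[simp] lemma sign_r (i : ZMod n) : sign (r i) = 1 := rfl
@[simp] lemma sign_sr (i : ZMod n) : sign (sr i) = -1 := rfl

lemma sign_surjective : Function.Surjective (sign : DihedralGroup n →* ℤˣ) := by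
  intro u
  rcases Int.units_eq_one_or u with rfl | rfl
  exacts [⟨r 0, rfl⟩, ⟨sr 0, rfl⟩]

def rotationSign (hn : 2 ∣ n) : DihedralGroup n →* ℤˣ where
  toFun
    | r i => (-1) ^ ZMod.castHom hn (ZMod 2) i
    | sr i => (-1) ^ ZMod.castHom hn (ZMod 2) i
  map_one' := by simp only [one_def, map_zero, uzpow_zero]
  map_mul' := by
    rintro (i | i) (j | j) <;>
      simp only [r_mul_r, r_mul_sr, sr_mul_r, sr_mul_sr, map_add, map_sub, uzpow_add, uzpow_sub,
        div_eq_mul_inv, Int.units_inv_eq_self, mul_comm]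

@[simp] lemma rotationSign_r (hn : 2 ∣ n) (i : ZMod n) :
    rotationSign hn (r i) = (-1) ^ ZMod.castHom hn (ZMod 2) i := rfl
@[simp] lemma rotationSign_sr (hn : 2 ∣ n) (i : ZMod n) :
    rotationSign hn (sr i) = (-1) ^ ZMod.castHom hn (ZMod 2) i := rfl

lemma sign_prod_rotationSign_surjective (hn : 2 ∣ n) :
    Function.Surjective (sign.prod (rotationSign hn)) := by
  rintro ⟨u, v⟩
  rcases Int.units_eq_one_or u with rfl | rfl <;> rcases Int.units_eq_one_or v with rfl | rfl
  exacts [⟨r 0, by simp [-r_zero]⟩, ⟨r 1, by simp [ZMod.cast_one hn]⟩, ⟨sr 0, by simp⟩,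
    ⟨sr 1, by simp [ZMod.cast_one hn]⟩]

lemma isConj_sr (hn : Odd n) (i j : ZMod n) : IsConj (sr i) (sr j) := by
  obtain ⟨t, rfl⟩ := hn
  -- `t + 1` is the inverse of `2` modulo `2 t + 1`
  have h2 : (2 * (t + 1) : ZMod (2 * t + 1)) = 1 := by
    have : ((2 * t + 1 : ℕ) : ZMod (2 * t + 1)) = 0 := ZMod.natCast_self _
    push_cast at this
    linear_combination this
  refine isConj_iff.2 ⟨r ((t + 1) * (i - j)), ?_⟩
  rw [inv_r, r_mul_sr, sr_mul_r]
  congr 1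
  linear_combination -(i - j) * h2

lemma isConj_of_sign_eq_neg_one (hn : Odd n) {d e : DihedralGroup n} (hd : sign d = -1)
    (he : sign e = -1) : IsConj d e := by
  cases d with
  | r => simp at hd
  | sr i =>
    cases e with
    | r => simp at he
    | sr j => exact isConj_sr hn i j

variable {m : ℕ}

lemma closure_pair_ne_top_of_two_dvd_left (hn : 2 ∣ n) (x y : DihedralGroup n × DihedralGroup m) :
    closure {x, y} ≠ ⊤ :=
  closure_pair_ne_top_of_surjective (f := (sign.prod (rotationSign hn)).prodMap sign) (by decide)
    (by simp) ((sign_prod_rotationSign_surjective hn).prodMap sign_surjective) x y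

lemma closure_pair_ne_top_of_two_dvd_right (hm : 2 ∣ m) (x y : DihedralGroup n × DihedralGroup m) :
    closure {x, y} ≠ ⊤ :=
  closure_pair_ne_top_of_surjective (f := sign.prodMap (sign.prod (rotationSign hm))) (by decide)
    (by simp) (sign_surjective.prodMap (sign_prod_rotationSign_surjective hm)) x y

end DihedralGroup

lemma mem_beauvilleSigma_of_isConj_s18 {G : Type*} [Group G] {x y u w : G}
    (hu : u ∈ ({x, y, x * y} : Set G)) (huw : IsConj u w) : w ∈ beauvilleSigma x y := by
  obtain ⟨c, rfl⟩ := isConj_iff.1 huw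
  refine ⟨1, c⁻¹, ?_⟩
  rw [inv_inv, zpow_one, zpow_one, zpow_one]
  rcases hu with rfl | rfl | rfl <;> simp

lemma IsBeauvilleStructure.eq_one_of_isConj {G : Type*} [Group G] {x₁ y₁ x₂ y₂ u₁ u₂ : G}
    (h : IsBeauvilleStructure x₁ y₁ x₂ y₂) (hu₁ : u₁ ∈ ({x₁, y₁, x₁ * y₁} : Set G))
    (hu₂ : u₂ ∈ ({x₂, y₂, x₂ * y₂} : Set G)) (hconj : IsConj u₁ u₂) : u₂ = 1 := by
  have : u₂ ∈ beauvilleSigma x₁ y₁ ∩ beauvilleSigma x₂ y₂ :=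
    ⟨mem_beauvilleSigma_of_isConj_s18 hu₁ hconj, mem_beauvilleSigma_of_isConj_s18 hu₂ (IsConj.refl _)⟩
  rwa [h.2.2] at this

theorem stmt_18_general (k k' : ℕ) :
    ¬ IsBeauvilleGroup (DihedralGroup k × DihedralGroup k') := by
  rintro ⟨x₁, y₁, x₂, y₂, hB⟩
  rcases Nat.even_or_odd k with hk | hk
  · exact closure_pair_ne_top_of_two_dvd_left hk.two_dvd x₁ y₁ hB.1
  rcases Nat.even_or_odd k' with hk' | hk'
  · exact closure_pair_ne_top_of_two_dvd_right hk'.two_dvd x₁ y₁ hB.1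
  have hsign : Function.Surjective (sign.prodMap sign :
      DihedralGroup k × DihedralGroup k' →* ℤˣ × ℤˣ) :=
    sign_surjective.prodMap sign_surjective
  obtain ⟨u₁, hu₁, hsign₁⟩ := exists_mem_map_eq_of_closure_pair_eq_top (by decide) hsign hB.1
    (t := ((-1, -1) : ℤˣ × ℤˣ)) (by decide)
  obtain ⟨u₂, hu₂, hsign₂⟩ := exists_mem_map_eq_of_closure_pair_eq_top (by decide) hsign hB.2.1
    (t := ((-1, -1) : ℤˣ × ℤˣ)) (by decide)
  have hconj : IsConj u₁ u₂ := IsConj.prodMk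
    (isConj_of_sign_eq_neg_one hk (congrArg Prod.fst hsign₁) (congrArg Prod.fst hsign₂))
    (isConj_of_sign_eq_neg_one hk' (congrArg Prod.snd hsign₁) (congrArg Prod.snd hsign₂))
  have hu₂_ne_one : u₂ ≠ 1 := by
    rintro rfl
    rw [map_one] at hsign₂
    exact absurd hsign₂ (by decide)
  exact hu₂_ne_one (hB.eq_one_of_isConj hu₁ hu₂ hconj)

/-- For all integers `k, k' ≥ 1`, the direct product of the dihedral groups of orders
`2k` and `2k'` (the Coxeter groups of types `I₂(k)` and `I₂(k')`) is not a Beauville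
group. -/
theorem stmt_18 (k k' : ℕ) (hk : 1 ≤ k) (hk' : 1 ≤ k') :
    ¬ IsBeauvilleGroup (DihedralGroup k × DihedralGroup k') :=
  stmt_18_general k k'
end

section
/- No finite Coxeter group is a mixable Beauville group; that is, for any finite Coxeter group H there do not exist elements a₁, c₁, a₂, c₂ ∈ H such that (1) the orders of a₁ and of c₁ are even, (2) ⟨a₁², a₁c₁, c₁²⟩ = H, (3) ⟨a₂, c₂⟩ = H, and (4) o(a₁)·o(c₁)·o(a₁c₁) is coprime to o(a₂)·o(c₂)·o(a₂c₂). -/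
/-- No finite Coxeter group is a mixable Beauville group: for a finite Coxeter group `H`
there do not exist `a₁, c₁, a₂, c₂ ∈ H` such that the orders of `a₁` and `c₁` are even,
`⟨a₁², a₁c₁, c₁²⟩ = H`, `⟨a₂, c₂⟩ = H`, and `o(a₁)·o(c₁)·o(a₁c₁)` is coprime to
`o(a₂)·o(c₂)·o(a₂c₂)`. -/
theorem stmt_19 (H : Type*) [Group H] [Finite H] [IsCoxeterGroup H] :
    ¬ ∃ a₁ c₁ a₂ c₂ : H,
        Even (orderOf a₁) ∧ Even (orderOf c₁) ∧
        Subgroup.closure {a₁ ^ 2, a₁ * c₁, c₁ ^ 2} = ⊤ ∧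
        Subgroup.closure {a₂, c₂} = ⊤ ∧
        Nat.Coprime (orderOf a₁ * orderOf c₁ * orderOf (a₁ * c₁))
          (orderOf a₂ * orderOf c₂ * orderOf (a₂ * c₂)) := by
  rintro ⟨a₁, c₁, a₂, c₂, he1, he2, hg1, hg2, hcop⟩
  obtain ⟨B, M, ⟨cs⟩⟩ := IsCoxeterGroup.nonempty_system (W := H)
  -- B is nonempty, else H is trivial and orderOf a₁ = 1 is not even
  have hB : Nonempty B := by
    by_contra hB
    rw [not_nonempty_iff] at hB
    obtain ⟨ω, rfl⟩ := cs.wordProd_surjective a₁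
    have : ω = [] := List.eq_nil_iff_forall_not_mem.2 fun x hx => (hB.false x).elim
    rw [this, CoxeterSystem.wordProd_nil, orderOf_one] at he1
    exact (Nat.not_even_iff.2 rfl) he1
  obtain ⟨i⟩ := hB
  set π := cs.lengthParity with hπ
  -- 2 divides the first product
  have h2 : 2 ∣ orderOf a₁ * orderOf c₁ * orderOf (a₁ * c₁) :=
    dvd_mul_of_dvd_left (dvd_mul_of_dvd_left he1.two_dvd _) _
  have hcop2 : Nat.Coprime 2 (orderOf a₂ * orderOf c₂ * orderOf (a₂ * c₂)) :=
    Nat.Coprime.coprime_dvd_left h2 hcop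
  -- both a₂ and c₂ map to 1 under π
  have key : ∀ x : H, orderOf x ∣ orderOf a₂ * orderOf c₂ * orderOf (a₂ * c₂) → π x = 1 := by
    intro x hx
    have h1 : orderOf (π x) ∣ orderOf x := orderOf_map_dvd π x
    have h2' : orderOf (π x) ∣ 2 := by
      have := orderOf_dvd_card (x := π x)
      simpa using this
    have h3 : orderOf (π x) = 1 :=
      Nat.eq_one_of_dvd_coprimes hcop2.symm (h1.trans hx) h2'
    exact orderOf_eq_one_iff.mp h3
  have ha2 : π a₂ = 1 := key a₂ (dvd_mul_of_dvd_left (dvd_mul_right _ _) _)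
  have hc2 : π c₂ = 1 := key c₂ (dvd_mul_of_dvd_left (dvd_mul_left _ _) _)
  -- hence π is trivial
  have htriv : ∀ x : H, π x = 1 := by
    intro x
    have : x ∈ Subgroup.closure {a₂, c₂} := hg2 ▸ Subgroup.mem_top x
    refine Subgroup.closure_induction ?_ (by simp) ?_ ?_ this
    · rintro y (rfl | rfl) <;> assumption
    · intro y z _ _ hy hz; rw [map_mul, hy, hz, one_mul]
    · intro y _ hy; rw [map_inv, hy, inv_one]
  have := htriv (cs.simple i)
  rw [cs.lengthParity_simple] at this
  exact absurd this (by decide)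
end
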